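/- Correctness of the two-phase incomplete skyline algorithm with flag-based (non-premature) deletion: let P be a finite set of incomplete tuples partitioned by null pattern and let S_local be the union of the skylines of the blocks. Then SKY(P) equals the set of tuples of S_local that are dominated by no tuple of S_local, i.e., SKY(P) = {p ∈ S_local | ¬∃ q ∈ S_local, q ≺ p}. -/
import Mathlib


/-- Dominance relation between (possibly) incomplete tuples: comparisons are
restricted to dimensions where both values are non-null. -/
def idominates {ι : Type*} (Dmin Dmax Ddiff : Set ι) (r s : ι → Option ℝ) : Prop :=
  (∀ i ∈ Dmin, ∀ x y : ℝ, r i = some x → s i = some y → x ≤ y) ∧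
  (∀ i ∈ Dmax, ∀ x y : ℝ, r i = some x → s i = some y → y ≤ x) ∧
  (∀ i ∈ Ddiff, ∀ x y : ℝ, r i = some x → s i = some y → x = y) ∧
  ((∃ i ∈ Dmin, ∃ x y : ℝ, r i = some x ∧ s i = some y ∧ x < y) ∨
   (∃ i ∈ Dmax, ∃ x y : ℝ, r i = some x ∧ s i = some y ∧ y < x))

/-- The skyline of a set of (possibly) incomplete tuples. -/
def iSKY {ι : Type*} (Dmin Dmax Ddiff : Set ι) (P : Set (ι → Option ℝ)) :
    Set (ι → Option ℝ) :=
  {p ∈ P | ¬ ∃ q ∈ P, idominates Dmin Dmax Ddiff q p}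

/-- The null pattern of an incomplete tuple. -/
def nullPattern {ι : Type*} (t : ι → Option ℝ) : Set ι := {i | t i = none}

lemma idom_irrefl {ι : Type*} {Dmin Dmax Ddiff : Set ι} (a : ι → Option ℝ) :
    ¬ idominates Dmin Dmax Ddiff a a := by
  rintro ⟨-, -, -, (⟨i, -, x, y, hx, hy, hlt⟩ | ⟨i, -, x, y, hx, hy, hlt⟩)⟩ <;>
    · rw [hx] at hy; injection hy with h; subst h; exact lt_irrefl _ hlt

lemma idom_trans {ι : Type*} {Dmin Dmax Ddiff : Set ι} {a b c : ι → Option ℝ}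
    (hpat : nullPattern a = nullPattern b)
    (hab : idominates Dmin Dmax Ddiff a b) (hbc : idominates Dmin Dmax Ddiff b c) :
    idominates Dmin Dmax Ddiff a c := by
  have hsome : ∀ i (x : ℝ), a i = some x → ∃ y, b i = some y := by
    intro i x hx
    cases hb : b i with
    | none =>
      have : a i = none := by
        have := Set.ext_iff.mp hpat i
        simp only [nullPattern, Set.mem_setOf_eq] at this
        exact this.mpr hb
      simp [hx] at this
    | some y => exact ⟨y, rfl⟩
  have hsome' : ∀ i (y : ℝ), b i = some y → ∃ x, a i = some x := by
    intro i y hy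
    cases ha : a i with
    | none =>
      have : b i = none := by
        have := Set.ext_iff.mp hpat i
        simp only [nullPattern, Set.mem_setOf_eq] at this
        exact this.mp ha
      simp [hy] at this
    | some x => exact ⟨x, rfl⟩
  obtain ⟨h1, h2, h3, h4⟩ := hab
  obtain ⟨g1, g2, g3, g4⟩ := hbc
  refine ⟨?_, ?_, ?_, ?_⟩
  · intro i hi x z hx hz
    obtain ⟨y, hy⟩ := hsome i x hx
    exact le_trans (h1 i hi x y hx hy) (g1 i hi y z hy hz)
  · intro i hi x z hx hz
    obtain ⟨y, hy⟩ := hsome i x hx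
    exact le_trans (g2 i hi y z hy hz) (h2 i hi x y hx hy)
  · intro i hi x z hx hz
    obtain ⟨y, hy⟩ := hsome i x hx
    exact (h3 i hi x y hx hy).trans (g3 i hi y z hy hz)
  · rcases g4 with ⟨j, hj, y, z, hy, hz, hlt⟩ | ⟨j, hj, y, z, hy, hz, hlt⟩
    · obtain ⟨x, hx⟩ := hsome' j y hy
      exact Or.inl ⟨j, hj, x, z, hx, hz, lt_of_le_of_lt (h1 j hj x y hx hy) hlt⟩
    · obtain ⟨x, hx⟩ := hsome' j y hy
      exact Or.inr ⟨j, hj, x, z, hx, hz, lt_of_lt_of_le hlt (h2 j hj x y hx hy)⟩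

lemma exists_min_aux {α : Type*} (r : α → α → Prop) (htrans : Transitive r)
    (hirr : Irreflexive r) {B : Set α} (hB : B.Finite) (hne : B.Nonempty) :
    ∃ m ∈ B, ∀ x ∈ B, ¬ r x m := by
  haveI : IsTrans α r := ⟨htrans⟩
  haveI : IsIrrefl α r := ⟨hirr⟩
  haveI : IsStrictOrder α r := ⟨⟩
  have hwf := Set.wellFoundedOn_iff.mp (hB.wellFoundedOn (r := r))
  obtain ⟨m, hmB, hmin⟩ := hwf.has_min B hne
  exact ⟨m, hmB, fun x hx hrx => hmin x hx ⟨hrx, hx, hmB⟩⟩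

theorem two_phase_incomplete_correct {ι : Type*} [Fintype ι] (Dmin Dmax Ddiff : Set ι)
    (hminmax : Disjoint Dmin Dmax) (hmindiff : Disjoint Dmin Ddiff)
    (hmaxdiff : Disjoint Dmax Ddiff)
    (P : Set (ι → Option ℝ)) (hP : P.Finite)
    (Slocal : Set (ι → Option ℝ))
    (hS : Slocal = ⋃ N : Set ι, iSKY Dmin Dmax Ddiff {p ∈ P | nullPattern p = N}) :
    iSKY Dmin Dmax Ddiff P =
      {p ∈ Slocal | ¬ ∃ q ∈ Slocal, idominates Dmin Dmax Ddiff q p} := by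
  have hSP : Slocal ⊆ P := by
    rw [hS]
    rintro q hq
    simp only [Set.mem_iUnion] at hq
    obtain ⟨N, hqN, -⟩ := hq
    exact hqN.1
  ext p
  constructor
  · rintro ⟨hpP, hnd⟩
    refine ⟨?_, ?_⟩
    · rw [hS]
      refine Set.mem_iUnion.mpr ⟨nullPattern p, ⟨⟨hpP, rfl⟩, ?_⟩⟩
      rintro ⟨q, ⟨hqP, -⟩, hdom⟩
      exact hnd ⟨q, hqP, hdom⟩
    · rintro ⟨q, hq, hdom⟩
      exact hnd ⟨q, hSP hq, hdom⟩
  · rintro ⟨hpS, hnd⟩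
    refine ⟨hSP hpS, ?_⟩
    rintro ⟨q, hqP, hdom⟩
    -- pick a minimal dominator within q's block
    set B : Set (ι → Option ℝ) :=
      {q' | q' ∈ P ∧ nullPattern q' = nullPattern q ∧ idominates Dmin Dmax Ddiff q' p} with hB
    have hBfin : B.Finite := hP.subset fun x hx => hx.1
    have hBne : B.Nonempty := ⟨q, hqP, rfl, hdom⟩
    set r : (ι → Option ℝ) → (ι → Option ℝ) → Prop :=
      fun a b => nullPattern a = nullPattern b ∧ idominates Dmin Dmax Ddiff a b with hr
    have htrans : Transitive r := by
      rintro a b c ⟨hab1, hab2⟩ ⟨hbc1, hbc2⟩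
      exact ⟨hab1.trans hbc1, idom_trans hab1 hab2 hbc2⟩
    have hirr : Irreflexive r := fun a ha => idom_irrefl a ha.2
    obtain ⟨m, ⟨hmP, hmpat, hmdom⟩, hmin⟩ := exists_min_aux r htrans hirr hBfin hBne
    have hmS : m ∈ Slocal := by
      rw [hS]
      refine Set.mem_iUnion.mpr ⟨nullPattern q, ⟨⟨hmP, hmpat⟩, ?_⟩⟩
      rintro ⟨q'', ⟨hq''P, hq''pat⟩, hq''dom⟩
      have hpat : nullPattern q'' = nullPattern m := hq''pat.trans hmpat.symm
      have hq''B : q'' ∈ B :=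
        ⟨hq''P, hq''pat, idom_trans hpat hq''dom hmdom⟩
      exact hmin q'' hq''B ⟨hpat, hq''dom⟩
    exact hnd ⟨m, hmS, hmdom⟩
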